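/- For all I, J ∈ {1, …, 2m} and all σ, τ ∈ P: 𝔄(Γ_I Γ_J σ, Γ_I Γ_J τ) = 𝔄(σ, τ) and 𝔅(Γ_I Γ_J σ, Γ_I Γ_J τ) = 𝔅(σ, τ); that is, both bilinear forms 𝔄 and 𝔅 are invariant under the generators Γ_I Γ_J of Spin(2m). -/
import Mathlib


noncomputable section

/-- The spinor space `P`: complex functions on subsets of `Fin m`
(the fermionic Fock model of the exterior algebra of `ℂ^m`). -/
abbrev SpinorSpace (m : ℕ) := Finset (Fin m) → ℂ

/-- The creation operator `c_j`. -/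
def creation {m : ℕ} (j : Fin m) (f : SpinorSpace m) : SpinorSpace m := fun S =>
  if j ∈ S then (-1 : ℂ) ^ (S.filter fun i => i < j).card * f (S.erase j) else 0

/-- The annihilation operator `a_j`. -/
def annihilation {m : ℕ} (j : Fin m) (f : SpinorSpace m) : SpinorSpace m := fun S =>
  if j ∈ S then 0 else (-1 : ℂ) ^ (S.filter fun i => i < j).card * f (insert j S)

/-- The gamma operators `Γ_I`, `I = 1, …, 2m`, here indexed by `Fin (2 * m)` (0-based):
`Γ_j = c_j + a_j` and `Γ_{m+j} = i (c_j − a_j)` for `j = 1, …, m`. -/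
def gammaOp {m : ℕ} (I : Fin (2 * m)) (f : SpinorSpace m) : SpinorSpace m :=
  if h : (I : ℕ) < m then
    creation ⟨(I : ℕ), h⟩ f + annihilation ⟨(I : ℕ), h⟩ f
  else
    Complex.I • (creation ⟨(I : ℕ) - m, by have := I.isLt; omega⟩ f
      - annihilation ⟨(I : ℕ) - m, by have := I.isLt; omega⟩ f)

/-- The Hermitian inner product `⟨f, g⟩ = Σ_S conj (f S) * g S` on the spinor space. -/
def herm {m : ℕ} (f g : SpinorSpace m) : ℂ :=
  ∑ S : Finset (Fin m), (starRingEnd ℂ) (f S) * g S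

/-- The composition `Γ_{I₁} ∘ Γ_{I₂} ∘ ⋯ ∘ Γ_{I_k}` corresponding to a list of indices. -/
def gammaProd {m : ℕ} (l : List (Fin (2 * m))) : SpinorSpace m → SpinorSpace m :=
  l.foldr (fun I F => gammaOp I ∘ F) id

/-- The conjugation operator `κ`. -/
def conjOp {m : ℕ} (f : SpinorSpace m) : SpinorSpace m := fun S => (starRingEnd ℂ) (f S)

/-- The conjugate-linear operator `A = Γ_1 ∘ Γ_2 ∘ ⋯ ∘ Γ_m ∘ κ`. -/
def opA (m : ℕ) : SpinorSpace m → SpinorSpace m :=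
  gammaProd (List.ofFn fun j : Fin m =>
    (⟨(j : ℕ), by have := j.isLt; omega⟩ : Fin (2 * m))) ∘ conjOp

/-- The conjugate-linear operator `B = Γ_{m+1} ∘ Γ_{m+2} ∘ ⋯ ∘ Γ_{2m} ∘ κ`. -/
def opB (m : ℕ) : SpinorSpace m → SpinorSpace m :=
  gammaProd (List.ofFn fun j : Fin m =>
    (⟨m + (j : ℕ), by have := j.isLt; omega⟩ : Fin (2 * m))) ∘ conjOp

/-- The bilinear form `𝔄(σ, τ) = ⟨A σ, τ⟩`. -/
def formA {m : ℕ} (σ τ : SpinorSpace m) : ℂ := herm (opA m σ) τ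

/-- The bilinear form `𝔅(σ, τ) = ⟨B σ, τ⟩`. -/
def formB {m : ℕ} (σ τ : SpinorSpace m) : ℂ := herm (opB m σ) τ


namespace SpinInvAux

variable {m : ℕ}

lemma neg_one_pow_mul_self (n : ℕ) : ((-1 : ℂ)) ^ n * (-1) ^ n = 1 := by
  rw [← pow_add, ← two_mul, pow_mul]; norm_num

lemma pow_filter_erase (k j : Fin m) (S : Finset (Fin m)) (hj : j ∈ S) :
    ((-1 : ℂ) ^ (((S.erase j).filter fun i => i < k)).card) =
      (if j < k then -1 else 1) * (-1) ^ ((S.filter fun i => i < k).card) := by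
  rw [Finset.filter_erase]
  by_cases h : j < k
  · have hm' : j ∈ S.filter (fun i => i < k) := Finset.mem_filter.2 ⟨hj, h⟩
    have h1 : 1 ≤ (S.filter (fun i => i < k)).card := Finset.card_pos.2 ⟨j, hm'⟩
    have hc : (S.filter fun i => i < k).card = ((S.filter fun i => i < k).erase j).card + 1 := by
      rw [Finset.card_erase_of_mem hm']; omega
    rw [hc]
    simp [h, pow_succ]
  · have hm' : j ∉ S.filter (fun i => i < k) := by simp [h]
    rw [Finset.erase_eq_of_notMem hm']
    simp [h]

lemma pow_filter_insert (k j : Fin m) (S : Finset (Fin m)) (hj : j ∉ S) :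
    ((-1 : ℂ) ^ (((insert j S).filter fun i => i < k)).card) =
      (if j < k then -1 else 1) * (-1) ^ ((S.filter fun i => i < k).card) := by
  have := pow_filter_erase k j (insert j S) (Finset.mem_insert_self j S)
  rw [Finset.erase_insert hj] at this
  by_cases h : j < k <;> simp [h] at this ⊢ <;>
    [skip; exact this.symm]
  rw [this]; ring

lemma creation_creation_same (j : Fin m) (f : SpinorSpace m) :
    creation j (creation j f) = 0 := by
  funext S; simp [creation]

lemma annihilation_annihilation_same (j : Fin m) (f : SpinorSpace m) :
    annihilation j (annihilation j f) = 0 := by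
  funext S; simp [annihilation]

lemma car_same (j : Fin m) (f : SpinorSpace m) :
    creation j (annihilation j f) + annihilation j (creation j f) = f := by
  funext S
  by_cases h : j ∈ S
  · simp only [Pi.add_apply, creation, annihilation, h, if_true, Finset.notMem_erase,
      if_false, add_zero, Finset.insert_erase h]
    have h2 := pow_filter_erase j j S h
    simp only [lt_irrefl, if_false, one_mul] at h2
    rw [h2, ← mul_assoc, neg_one_pow_mul_self, one_mul]
  · simp only [Pi.add_apply, creation, annihilation, h, if_false, Finset.mem_insert_self,
      if_true, zero_add, Finset.erase_insert h]
    have h2 := pow_filter_insert j j S h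
    simp only [lt_irrefl, if_false, one_mul] at h2
    rw [h2, ← mul_assoc, neg_one_pow_mul_self, one_mul]

lemma creation_creation_anti {j k : Fin m} (h : j ≠ k) (f : SpinorSpace m) :
    creation j (creation k f) = -(creation k (creation j f)) := by
  have hkj : k ≠ j := h.symm
  funext S
  by_cases hj : j ∈ S
  · by_cases hk : k ∈ S
    · simp only [Pi.neg_apply, creation, hj, hk, if_true, Finset.mem_erase, hkj, h,
        ne_eq, not_false_iff, true_and, if_true]
      rw [Finset.erase_right_comm (a := j) (b := k),
        pow_filter_erase k j S hj, pow_filter_erase j k S hk]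
      rcases h.lt_or_gt with h' | h'
      · simp only [h', if_true, asymm h', if_false]; ring
      · simp only [h', if_true, asymm h', if_false]; ring
    · simp [creation, hj, hk, hkj]
  · simp [creation, hj, h]

lemma annihilation_annihilation_anti {j k : Fin m} (h : j ≠ k) (f : SpinorSpace m) :
    annihilation j (annihilation k f) = -(annihilation k (annihilation j f)) := by
  have hkj : k ≠ j := h.symm
  funext S
  by_cases hj : j ∈ S
  · simp [annihilation, hj, hkj]
  · by_cases hk : k ∈ S
    · simp [annihilation, hj, hk, h, hkj]
    · simp only [Pi.neg_apply, annihilation, hj, hk, if_false, Finset.mem_insert, hkj, h,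
        false_or, if_false]
      rw [Finset.insert_comm (a := j) (b := k),
        pow_filter_insert k j S hj, pow_filter_insert j k S hk]
      rcases h.lt_or_gt with h' | h'
      · simp only [h', if_true, asymm h', if_false]; ring
      · simp only [h', if_true, asymm h', if_false]; ring

lemma creation_annihilation_anti {j k : Fin m} (h : j ≠ k) (f : SpinorSpace m) :
    creation j (annihilation k f) = -(annihilation k (creation j f)) := by
  have hkj : k ≠ j := h.symm
  funext S
  by_cases hj : j ∈ S
  · by_cases hk : k ∈ S
    · simp [creation, annihilation, hj, hk, hkj]
    · simp only [Pi.neg_apply, creation, annihilation, hj, hk, if_true, if_false,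
        Finset.mem_erase, Finset.mem_insert, hkj, h, ne_eq, not_false_iff, true_and,
        false_or, if_true]
      rw [show insert k (S.erase j) = (insert k S).erase j from
          (Finset.erase_insert_of_ne hkj).symm,
        pow_filter_erase k j S hj, pow_filter_insert j k S hk]
      rcases h.lt_or_gt with h' | h'
      · simp only [h', if_true, asymm h', if_false]; ring
      · simp only [h', if_true, asymm h', if_false]; ring
  · by_cases hk : k ∈ S
    · simp [creation, annihilation, hj, hk, h, hkj]
    · simp [creation, annihilation, hj, hk, h, hkj]

lemma annihilation_creation_anti {j k : Fin m} (h : j ≠ k) (f : SpinorSpace m) :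
    annihilation j (creation k f) = -(creation k (annihilation j f)) := by
  have := creation_annihilation_anti h.symm f
  rw [this]; simp

-- linearity
lemma creation_add (j : Fin m) (f g : SpinorSpace m) :
    creation j (f + g) = creation j f + creation j g := by
  funext S; simp only [creation, Pi.add_apply]; split_ifs <;> ring

lemma annihilation_add (j : Fin m) (f g : SpinorSpace m) :
    annihilation j (f + g) = annihilation j f + annihilation j g := by
  funext S; simp only [annihilation, Pi.add_apply]; split_ifs <;> ring

lemma creation_sub (j : Fin m) (f g : SpinorSpace m) :
    creation j (f - g) = creation j f - creation j g := by
  funext S; simp only [creation, Pi.sub_apply]; split_ifs <;> ring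

lemma annihilation_sub (j : Fin m) (f g : SpinorSpace m) :
    annihilation j (f - g) = annihilation j f - annihilation j g := by
  funext S; simp only [annihilation, Pi.sub_apply]; split_ifs <;> ring

lemma creation_smul (j : Fin m) (c : ℂ) (f : SpinorSpace m) :
    creation j (c • f) = c • creation j f := by
  funext S; simp only [creation, Pi.smul_apply, smul_eq_mul]; split_ifs <;> ring

lemma annihilation_smul (j : Fin m) (c : ℂ) (f : SpinorSpace m) :
    annihilation j (c • f) = c • annihilation j f := by
  funext S; simp only [annihilation, Pi.smul_apply, smul_eq_mul]; split_ifs <;> ring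

lemma gammaOp_smul (I : Fin (2 * m)) (c : ℂ) (f : SpinorSpace m) :
    gammaOp I (c • f) = c • gammaOp I f := by
  unfold gammaOp; split_ifs with h
  · rw [creation_smul, annihilation_smul, smul_add]
  · rw [creation_smul, annihilation_smul, ← smul_sub, smul_comm]

lemma gammaOp_sq (I : Fin (2 * m)) (f : SpinorSpace m) : gammaOp I (gammaOp I f) = f := by
  unfold gammaOp; split_ifs with h
  · rw [creation_add, annihilation_add, creation_creation_same,
      annihilation_annihilation_same, zero_add, add_zero]
    rw [show creation ⟨(I:ℕ), h⟩ (annihilation ⟨(I:ℕ), h⟩ f) +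
        (annihilation ⟨(I:ℕ), h⟩ (creation ⟨(I:ℕ), h⟩ f)) = f from car_same _ f]
  · rw [creation_smul, annihilation_smul, ← smul_sub, smul_smul, Complex.I_mul_I,
      creation_sub, annihilation_sub, creation_creation_same,
      annihilation_annihilation_same, neg_one_smul]
    rw [show (0 : SpinorSpace m) - creation _ (annihilation _ f)
        - (annihilation _ (creation _ f) - 0)
        = -(creation _ (annihilation _ f) + annihilation _ (creation _ f)) by abel,
      neg_neg, car_same]

lemma gammaOp_anti {I J : Fin (2 * m)} (hIJ : I ≠ J) (f : SpinorSpace m) :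
    gammaOp I (gammaOp J f) = -(gammaOp J (gammaOp I f)) := by
  unfold gammaOp
  split_ifs with hI hJ hJ
  · have hjk : (⟨(I : ℕ), hI⟩ : Fin m) ≠ ⟨(J : ℕ), hJ⟩ := by
      simp only [ne_eq, Fin.mk.injEq]; exact fun h => hIJ (Fin.ext h)
    rw [creation_add, annihilation_add, creation_add, annihilation_add,
      creation_creation_anti hjk, creation_annihilation_anti hjk,
      annihilation_creation_anti hjk, annihilation_annihilation_anti hjk]
    abel
  · set j : Fin m := ⟨(I : ℕ), hI⟩
    set k : Fin m := ⟨(J : ℕ) - m, by have := J.isLt; omega⟩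
    rw [creation_smul, annihilation_smul, ← smul_add, ← smul_neg]
    congr 1
    by_cases hjk : j = k
    · rw [hjk]
      rw [creation_sub, annihilation_sub, creation_add, annihilation_add,
        creation_creation_same, annihilation_annihilation_same]
      abel
    · rw [creation_sub, annihilation_sub, creation_add, annihilation_add,
        creation_creation_anti hjk, creation_annihilation_anti hjk,
        annihilation_creation_anti hjk, annihilation_annihilation_anti hjk]
      abel
  · set j : Fin m := ⟨(I : ℕ) - m, by have := I.isLt; omega⟩
    set k : Fin m := ⟨(J : ℕ), hJ⟩
    rw [creation_smul, annihilation_smul, ← smul_add, ← smul_neg]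
    congr 1
    by_cases hjk : j = k
    · rw [hjk]
      rw [creation_sub, annihilation_sub, creation_add, annihilation_add,
        creation_creation_same, annihilation_annihilation_same]
      abel
    · rw [creation_sub, annihilation_sub, creation_add, annihilation_add,
        creation_creation_anti hjk, creation_annihilation_anti hjk,
        annihilation_creation_anti hjk, annihilation_annihilation_anti hjk]
      abel
  · have hjk : (⟨(I : ℕ) - m, by have := I.isLt; omega⟩ : Fin m)
        ≠ ⟨(J : ℕ) - m, by have := J.isLt; omega⟩ := by
      simp only [ne_eq, Fin.mk.injEq]
      intro h
      exact hIJ (Fin.ext (by omega))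
    rw [creation_smul, annihilation_smul, ← smul_sub, smul_smul, Complex.I_mul_I,
      creation_smul, annihilation_smul, ← smul_sub, smul_smul, Complex.I_mul_I,
      creation_sub, annihilation_sub, creation_sub, annihilation_sub,
      creation_creation_anti hjk, creation_annihilation_anti hjk,
      annihilation_creation_anti hjk, annihilation_annihilation_anti hjk,
      neg_one_smul, neg_one_smul]
    abel

lemma conj_neg_one_pow (n : ℕ) : (starRingEnd ℂ) ((-1 : ℂ) ^ n) = (-1) ^ n := by
  simp

lemma herm_creation (j : Fin m) (f g : SpinorSpace m) :
    herm (creation j f) g = herm f (annihilation j g) := by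
  unfold herm creation annihilation
  rw [← Finset.sum_filter_add_sum_filter_not Finset.univ (fun S => j ∈ S),
    ← Finset.sum_filter_add_sum_filter_not Finset.univ (fun S => j ∈ S)
      (fun S => (starRingEnd ℂ) (f S) * _)]
  have h1 : ∀ S ∈ Finset.univ.filter (fun S : Finset (Fin m) => ¬ j ∈ S),
      (starRingEnd ℂ) (if j ∈ S then (-1:ℂ) ^ (S.filter fun i => i < j).card * f (S.erase j)
        else 0) * g S = 0 := by
    intro S hS
    rw [Finset.mem_filter] at hS
    simp [hS.2]
  have h2 : ∀ S ∈ Finset.univ.filter (fun S : Finset (Fin m) => j ∈ S),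
      (starRingEnd ℂ) (f S) * (if j ∈ S then 0
        else (-1:ℂ) ^ (S.filter fun i => i < j).card * g (insert j S)) = 0 := by
    intro S hS
    rw [Finset.mem_filter] at hS
    simp [hS.2]
  rw [Finset.sum_eq_zero h1, Finset.sum_eq_zero h2, add_zero, zero_add]
  refine Finset.sum_nbij' (fun S => S.erase j) (fun S => insert j S) ?_ ?_ ?_ ?_ ?_
  · intro S hS; rw [Finset.mem_filter] at *; simp
  · intro S hS; rw [Finset.mem_filter] at hS ⊢; simp
  · intro S hS; rw [Finset.mem_filter] at hS; exact Finset.insert_erase hS.2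
  · intro S hS; rw [Finset.mem_filter] at hS; exact Finset.erase_insert hS.2
  · intro S hS
    rw [Finset.mem_filter] at hS
    have hj := hS.2
    rw [if_pos hj, if_neg (Finset.notMem_erase j S), Finset.insert_erase hj]
    have h3 := pow_filter_erase j j S hj
    simp only [lt_irrefl, if_false, one_mul] at h3
    rw [h3, map_mul, conj_neg_one_pow]
    ring

lemma herm_conj_symm (f g : SpinorSpace m) : herm f g = (starRingEnd ℂ) (herm g f) := by
  rw [herm, herm, map_sum]
  refine Finset.sum_congr rfl fun S _ => ?_
  rw [map_mul, Complex.conj_conj, mul_comm]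

lemma herm_add_left (f g h : SpinorSpace m) : herm (f + g) h = herm f h + herm g h := by
  simp [herm, add_mul, Finset.sum_add_distrib]
lemma herm_add_right (f g h : SpinorSpace m) : herm f (g + h) = herm f g + herm f h := by
  simp [herm, mul_add, Finset.sum_add_distrib]
lemma herm_sub_left (f g h : SpinorSpace m) : herm (f - g) h = herm f h - herm g h := by
  simp [herm, sub_mul, Finset.sum_sub_distrib]
lemma herm_sub_right (f g h : SpinorSpace m) : herm f (g - h) = herm f g - herm f h := by
  simp [herm, mul_sub, Finset.sum_sub_distrib]
lemma herm_smul_left (c : ℂ) (f g : SpinorSpace m) :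
    herm (c • f) g = (starRingEnd ℂ) c * herm f g := by
  simp [herm, Finset.mul_sum, mul_assoc]
lemma herm_smul_right (c : ℂ) (f g : SpinorSpace m) : herm f (c • g) = c * herm f g := by
  simp [herm, Finset.mul_sum]; refine Finset.sum_congr rfl fun S _ => by ring

lemma herm_annihilation (j : Fin m) (f g : SpinorSpace m) :
    herm (annihilation j f) g = herm f (creation j g) := by
  rw [herm_conj_symm, ← herm_creation, ← herm_conj_symm]

lemma herm_gammaOp (I : Fin (2 * m)) (f g : SpinorSpace m) :
    herm (gammaOp I f) g = herm f (gammaOp I g) := by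
  unfold gammaOp; split_ifs with h
  · rw [herm_add_left, herm_creation, herm_annihilation, herm_add_right]
    ring
  · rw [herm_smul_left, herm_smul_right, herm_sub_left, herm_sub_right,
      herm_creation, herm_annihilation, Complex.conj_I]
    ring

lemma conjOp_creation (j : Fin m) (f : SpinorSpace m) :
    conjOp (creation j f) = creation j (conjOp f) := by
  funext S
  simp only [conjOp, creation, apply_ite (starRingEnd ℂ), map_mul, map_zero, conj_neg_one_pow]
lemma conjOp_annihilation (j : Fin m) (f : SpinorSpace m) :
    conjOp (annihilation j f) = annihilation j (conjOp f) := by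
  funext S
  simp only [conjOp, annihilation, apply_ite (starRingEnd ℂ), map_mul, map_zero,
    conj_neg_one_pow]
lemma conjOp_add (f g : SpinorSpace m) : conjOp (f + g) = conjOp f + conjOp g := by
  funext S; simp [conjOp]
lemma conjOp_sub (f g : SpinorSpace m) : conjOp (f - g) = conjOp f - conjOp g := by
  funext S; simp [conjOp]
lemma conjOp_smul (c : ℂ) (f : SpinorSpace m) :
    conjOp (c • f) = (starRingEnd ℂ) c • conjOp f := by
  funext S; simp [conjOp]

lemma conjOp_gammaOp (I : Fin (2 * m)) (f : SpinorSpace m) :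
    conjOp (gammaOp I f)
      = (if (I : ℕ) < m then (1 : ℂ) else -1) • gammaOp I (conjOp f) := by
  unfold gammaOp; split_ifs with h
  · rw [conjOp_add, conjOp_creation, conjOp_annihilation, one_smul]
  · rw [conjOp_smul, conjOp_sub, conjOp_creation, conjOp_annihilation, Complex.conj_I,
      smul_smul]
    norm_num

lemma gammaProd_nil (f : SpinorSpace m) : gammaProd ([] : List (Fin (2 * m))) f = f := rfl
lemma gammaProd_cons (K : Fin (2 * m)) (l : List (Fin (2 * m))) (f : SpinorSpace m) :
    gammaProd (K :: l) f = gammaOp K (gammaProd l f) := rfl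
lemma gammaProd_smul (l : List (Fin (2 * m))) (c : ℂ) (f : SpinorSpace m) :
    gammaProd l (c • f) = c • gammaProd l f := by
  induction l with
  | nil => rfl
  | cons K l ih => rw [gammaProd_cons, gammaProd_cons, ih, gammaOp_smul]

lemma gammaProd_gammaOp (l : List (Fin (2 * m))) (I : Fin (2 * m)) (f : SpinorSpace m) :
    gammaProd l (gammaOp I f)
      = ((-1 : ℂ) ^ (l.filter fun K => K ≠ I).length) • gammaOp I (gammaProd l f) := by
  induction l with
  | nil => simp [gammaProd_nil]
  | cons K l ih =>
    rw [gammaProd_cons, ih, gammaOp_smul, gammaProd_cons, List.filter_cons]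
    by_cases hKI : K = I
    · simp [hKI]
    · simp only [hKI, decide_not, ne_eq, not_false_iff, decide_true, List.length_cons,
        if_true]
      rw [gammaOp_anti hKI, smul_neg, pow_succ, mul_neg_one, neg_smul]

lemma filter_ne_length {α : Type*} [DecidableEq α] (l : List α) (hl : l.Nodup) (I : α) :
    (l.filter fun K => K ≠ I).length = l.length - (if I ∈ l then 1 else 0) := by
  induction l with
  | nil => simp
  | cons a l ih =>
    rw [List.nodup_cons] at hl
    rw [List.filter_cons]
    by_cases h : a = I
    · subst h
      have h2 : (l.filter fun K => K ≠ a) = l :=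
        List.filter_eq_self.mpr fun b hb => by
          simpa using fun hba : b = a => hl.1 (hba ▸ hb)
      simp [h2, hl.1]
      exact fun b hb hba => hl.1 (hba ▸ hb)
    · by_cases hIl : I ∈ l
      · have hlen := List.length_pos_iff.mpr (List.ne_nil_of_mem hIl)
        simp only [h, ne_eq, not_false_iff, decide_true, if_true, List.length_cons,
          List.mem_cons, hIl, or_true, ih hl.2]
        omega
      · have h2 : (l.filter fun K => K ≠ I) = l :=
          List.filter_eq_self.mpr fun b hb => by
            simpa using fun hbI : b = I => hIl (hbI ▸ hb)
        simp [h, hIl, h2, Ne.symm h]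
        exact fun b hb hbI => hIl (hbI ▸ hb)

def listA (m : ℕ) : List (Fin (2 * m)) :=
  List.ofFn fun j : Fin m => (⟨(j : ℕ), by have := j.isLt; omega⟩ : Fin (2 * m))
def listB (m : ℕ) : List (Fin (2 * m)) :=
  List.ofFn fun j : Fin m => (⟨m + (j : ℕ), by have := j.isLt; omega⟩ : Fin (2 * m))

lemma listA_nodup : (listA m).Nodup :=
  List.nodup_ofFn.mpr fun a b hab => by
    simpa using Fin.ext (by simpa using congrArg Fin.val hab)
lemma listB_nodup : (listB m).Nodup :=
  List.nodup_ofFn.mpr fun a b hab => by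
    have := congrArg Fin.val hab
    simp only at this
    exact Fin.ext (by omega)
lemma listA_length : (listA m).length = m := by simp [listA]
lemma listB_length : (listB m).length = m := by simp [listB]
lemma mem_listA (I : Fin (2 * m)) : I ∈ listA m ↔ (I : ℕ) < m := by
  simp only [listA, List.mem_ofFn, Set.mem_range]
  constructor
  · rintro ⟨j, rfl⟩; exact j.isLt
  · intro h; exact ⟨⟨(I : ℕ), h⟩, Fin.ext rfl⟩
lemma mem_listB (I : Fin (2 * m)) : I ∈ listB m ↔ ¬ (I : ℕ) < m := by
  simp only [listB, List.mem_ofFn, Set.mem_range]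
  constructor
  · rintro ⟨j, rfl⟩; simp
  · intro h
    refine ⟨⟨(I : ℕ) - m, by have := I.isLt; omega⟩, Fin.ext ?_⟩
    simp; omega

lemma opA_gammaOp (hm : 1 ≤ m) (I : Fin (2 * m)) (f : SpinorSpace m) :
    opA m (gammaOp I f) = ((-1 : ℂ) ^ (m - 1)) • gammaOp I (opA m f) := by
  show gammaProd (listA m) (conjOp (gammaOp I f))
    = ((-1 : ℂ) ^ (m - 1)) • gammaOp I (gammaProd (listA m) (conjOp f))
  rw [conjOp_gammaOp, gammaProd_smul, gammaProd_gammaOp, smul_smul,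
    filter_ne_length _ listA_nodup, listA_length]
  congr 1
  by_cases h : (I : ℕ) < m
  · simp [h, mem_listA]
  · simp only [mem_listA, h, if_false, Nat.sub_zero]
    have h2 : m = (m - 1) + 1 := by omega
    conv_lhs => rw [h2]
    rw [pow_succ]
    ring

lemma opB_gammaOp (I : Fin (2 * m)) (f : SpinorSpace m) :
    opB m (gammaOp I f) = ((-1 : ℂ) ^ m) • gammaOp I (opB m f) := by
  show gammaProd (listB m) (conjOp (gammaOp I f))
    = ((-1 : ℂ) ^ m) • gammaOp I (gammaProd (listB m) (conjOp f))
  rw [conjOp_gammaOp, gammaProd_smul, gammaProd_gammaOp, smul_smul,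
    filter_ne_length _ listB_nodup, listB_length]
  congr 1
  by_cases h : (I : ℕ) < m
  · simp [h, mem_listB]
  · have hm : 1 ≤ m := by have := I.isLt; omega
    simp only [mem_listB, h, if_false, not_false_iff, if_true]
    have h2 : m = (m - 1) + 1 := by omega
    conv_rhs => rw [h2]
    rw [pow_succ]
    ring

end SpinInvAux

open SpinInvAux in
/-- both bilinear forms `𝔄` and `𝔅` are invariant under the generators
`Γ_I Γ_J` of `Spin(2m)`. -/
theorem formA_formB_spin_invariant (m : ℕ) (hm : 1 ≤ m) :
    ∀ I J : Fin (2 * m), ∀ σ τ : SpinorSpace m,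
      formA (gammaOp I (gammaOp J σ)) (gammaOp I (gammaOp J τ)) = formA σ τ ∧
      formB (gammaOp I (gammaOp J σ)) (gammaOp I (gammaOp J τ)) = formB σ τ := by
  intro I J σ τ
  have key : ∀ (op : SpinorSpace m → SpinorSpace m) (e : ℂ),
      (∀ (K : Fin (2 * m)) (f : SpinorSpace m), op (gammaOp K f) = e • gammaOp K (op f)) →
      e * e = 1 →
      herm (op (gammaOp I (gammaOp J σ))) (gammaOp I (gammaOp J τ)) = herm (op σ) τ := by
    intro op e hcomm he
    rw [hcomm, hcomm, gammaOp_smul, smul_smul, he, one_smul,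
      herm_gammaOp, gammaOp_sq, herm_gammaOp, gammaOp_sq]
  constructor
  · exact key (opA m) _ (fun K f => opA_gammaOp hm K f) (neg_one_pow_mul_self _)
  · exact key (opB m) _ (fun K f => opB_gammaOp K f) (neg_one_pow_mul_self _)
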